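/- (Planar version of Remark 5.2: multiplicative sprays preserve the class 𝒪_Δ(S,u).) Let n ≥ 3, let Ω ⊆ ℂ be open, let P ⊂ Ω be finite, let E₀ ⊆ P, and let r ∈ ℕ. Let u = (u₁,…,uₙ) : Ω \ E₀ → ℂⁿ be holomorphic with values in 𝔖*, each component meromorphic at every p ∈ E₀; for p ∈ P set d(p) = r + Σᵢ max(0, pole order of uᵢ at p). Let g : Ω → ℂ be holomorphic with |g(z)| < 1 for all z ∈ Ω and vanishing to order at least d(p) at every p ∈ P. Let (s₁,s₂,s₃) ∈ 𝒮₂(𝔻), and let v = (v₁,…,vₙ) : Ω \ E₀ → ℂⁿ be holomorphic with values in 𝔖*, each component meromorphic at every p ∈ E₀, such that for every i the difference vᵢ − uᵢ extends holomorphically across E₀ and vanishes to order at least r at every p ∈ P. Then the map w := ((s₁∘g)·v₁, (s₂∘g)·v₂, (s₃∘g)·v₃, …, (s₃∘g)·vₙ) is holomorphic on Ω \ E₀ with values in 𝔖*, each component of w is meromorphic at every p ∈ E₀, and for every i the difference wᵢ − uᵢ extends holomorphically across E₀ and vanishes to order at least r at every p ∈ P. -/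

import Mathlib

open Complex Filter
open scoped Topology

noncomputable section

/-- The punctured quadric `𝔖* = {u ∈ ℂⁿ \ {0} : u₁u₂ = u₃² + … + uₙ²}`. -/
def SStar (n : ℕ) (hn : 2 ≤ n) : Set (Fin n → ℂ) :=
  {u | u ≠ 0 ∧ u ⟨0, by omega⟩ * u ⟨1, by omega⟩ =
      ∑ j : Fin n, if 2 ≤ (j : ℕ) then u j ^ 2 else 0}

/-- `f` extends meromorphically to the point `p`. -/
def MeromAt (f : ℂ → ℂ) (p : ℂ) : Prop :=
  ∃ (m : ℕ) (g : ℂ → ℂ), AnalyticAt ℂ g p ∧ ∀ᶠ z in 𝓝[≠] p, f z = g z / (z - p) ^ m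

/-- `f` is holomorphic near `p` and vanishes there to order at least `r`. -/
def VanishesToOrder (f : ℂ → ℂ) (p : ℂ) (r : ℕ) : Prop :=
  ∃ g : ℂ → ℂ, AnalyticAt ℂ g p ∧ ∀ᶠ z in 𝓝 p, f z = (z - p) ^ r * g z

/-- `f` (possibly undefined at `p`) extends holomorphically across `p` with a zero of
order at least `r` there. -/
def ExtVanishes (f : ℂ → ℂ) (p : ℂ) (r : ℕ) : Prop :=
  ∃ g : ℂ → ℂ, AnalyticAt ℂ g p ∧ ∀ᶠ z in 𝓝[≠] p, f z = (z - p) ^ r * g z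

/-- `(s₁,s₂,s₃)` belongs to the class `𝒮₂(𝔻)`. -/
def InS2 (s₁ s₂ s₃ : ℂ → ℂ) : Prop :=
  DifferentiableOn ℂ s₁ (Metric.ball 0 1) ∧ DifferentiableOn ℂ s₂ (Metric.ball 0 1) ∧
  DifferentiableOn ℂ s₃ (Metric.ball 0 1) ∧
  (∀ z ∈ Metric.ball (0 : ℂ) 1, s₁ z ≠ 0 ∧ s₂ z ≠ 0 ∧ s₃ z ≠ 0 ∧
    s₁ z * s₂ z = s₃ z ^ 2) ∧
  s₁ 0 = 1 ∧ s₂ 0 = 1 ∧ s₃ 0 = 1 ∧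
  deriv s₁ 0 * deriv s₂ 0 ≠ 0 ∧
  ((∀ z ∈ Metric.ball (0 : ℂ) 1, s₃ z = 1) ∨ deriv s₃ 0 ≠ 0)

/-!
With `σᵢ = sᵢ ∘ g`, the relation `s₁s₂ = s₃²` keeps `w` on the quadric, and
`wᵢ - uᵢ = σᵢ (vᵢ - uᵢ) + (σᵢ - 1) uᵢ`. The first term vanishes to order `r` with `vᵢ - uᵢ`;
in the second, `σᵢ - 1 = sᵢ ∘ g - sᵢ(0)` vanishes to order `d(p) ≥ r + ord p i` because `g`
does, which absorbs the pole of `uᵢ` at `p`.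
-/

theorem AnalyticAt.dslope_self {𝕜 E : Type*} [NontriviallyNormedField 𝕜] [NormedAddCommGroup E]
    [NormedSpace 𝕜 E] {f : 𝕜 → E} {a : 𝕜} (hf : AnalyticAt 𝕜 f a) :
    AnalyticAt 𝕜 (dslope f a) a :=
  let ⟨_, hp⟩ := hf
  ⟨_, hp.has_fpower_series_dslope_fslope⟩

theorem VanishesToOrder.analyticAt {f : ℂ → ℂ} {p : ℂ} {d : ℕ} (hf : VanishesToOrder f p d) :
    AnalyticAt ℂ f p := by
  obtain ⟨G, hG, hfG⟩ := hf
  exact (((analyticAt_id.sub analyticAt_const).pow d).mul hG).congr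
    (hfG.mono fun _ hz => hz.symm)

theorem VanishesToOrder.comp_sub_apply_zero {g s : ℂ → ℂ} {p : ℂ} {d : ℕ}
    (hg : VanishesToOrder g p d) (hs : AnalyticAt ℂ s (g p)) :
    VanishesToOrder (fun z => s (g z) - s 0) p d := by
  have hga := hg.analyticAt
  rcases Nat.eq_zero_or_pos d with rfl | hd
  · exact ⟨_, (hs.comp hga).sub analyticAt_const, .of_forall fun z => (one_mul _).symm⟩
  obtain ⟨G, hG, hgG⟩ := hg
  have hgp : g p = 0 := by simpa [zero_pow hd.ne'] using hgG.self_of_nhds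
  rw [hgp] at hs
  refine ⟨fun z => G z * dslope s 0 (g z), hG.mul (hs.dslope_self.comp_of_eq hga hgp), ?_⟩
  filter_upwards [hgG] with z hz
  rw [← sub_smul_dslope s 0 (g z), hz, smul_eq_mul, sub_zero]
  ring

theorem ExtVanishes.add {f f' : ℂ → ℂ} {p : ℂ} {r : ℕ} (hf : ExtVanishes f p r)
    (hf' : ExtVanishes f' p r) : ExtVanishes (fun z => f z + f' z) p r := by
  obtain ⟨G, hG, hfG⟩ := hf
  obtain ⟨G', hG', hfG'⟩ := hf'
  refine ⟨G + G', hG.add hG', ?_⟩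
  filter_upwards [hfG, hfG'] with z hz hz'
  rw [hz, hz', Pi.add_apply, mul_add]

theorem ExtVanishes.analyticAt_mul {a f : ℂ → ℂ} {p : ℂ} {r : ℕ} (ha : AnalyticAt ℂ a p)
    (hf : ExtVanishes f p r) : ExtVanishes (fun z => a z * f z) p r := by
  obtain ⟨G, hG, hfG⟩ := hf
  refine ⟨a * G, ha.mul hG, ?_⟩
  filter_upwards [hfG] with z hz
  rw [hz, Pi.mul_apply]
  ring

theorem VanishesToOrder.extVanishes_mul_of_pole {c f h : ℂ → ℂ} {p : ℂ} {r m d : ℕ}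
    (hc : VanishesToOrder c p d) (hrmd : r + m ≤ d) (hh : AnalyticAt ℂ h p)
    (hf : ∀ᶠ z in 𝓝[≠] p, f z = h z / (z - p) ^ m) :
    ExtVanishes (fun z => c z * f z) p r := by
  obtain ⟨C, hC, hcC⟩ := hc
  obtain ⟨e, rfl⟩ := Nat.exists_eq_add_of_le hrmd
  refine ⟨fun z => (z - p) ^ e * (C z * h z),
    ((analyticAt_id.sub analyticAt_const).pow e).mul (hC.mul hh), ?_⟩
  filter_upwards [hcC.filter_mono nhdsWithin_le_nhds, hf, self_mem_nhdsWithin]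
    with z hcz hfz hz
  have hzp : (z - p) ^ m ≠ 0 := pow_ne_zero _ (sub_ne_zero.mpr hz)
  rw [hcz, hfz]
  field_simp
  ring

theorem ExtVanishes.mul_sub {σ f u h : ℂ → ℂ} {p : ℂ} {r m d : ℕ}
    (hfu : ExtVanishes (fun z => f z - u z) p r) (hσ : AnalyticAt ℂ σ p)
    (hσ1 : VanishesToOrder (fun z => σ z - 1) p d) (hrmd : r + m ≤ d)
    (hh : AnalyticAt ℂ h p) (hu : ∀ᶠ z in 𝓝[≠] p, u z = h z / (z - p) ^ m) :
    ExtVanishes (fun z => σ z * f z - u z) p r := by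
  have hsplit : (fun z => σ z * f z - u z) =
      fun z => σ z * (f z - u z) + (σ z - 1) * u z := by
    funext z; ring
  rw [hsplit]
  exact (hfu.analyticAt_mul hσ).add (hσ1.extVanishes_mul_of_pole hrmd hh hu)

theorem MeromAt.analyticAt_mul {a f : ℂ → ℂ} {p : ℂ} (ha : AnalyticAt ℂ a p)
    (hf : MeromAt f p) : MeromAt (fun z => a z * f z) p := by
  obtain ⟨m, G, hG, hfG⟩ := hf
  refine ⟨m, a * G, ha.mul hG, ?_⟩
  filter_upwards [hfG] with z hz
  rw [hz, Pi.mul_apply, mul_div_assoc]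

theorem ite_mul_mem_SStar {n : ℕ} (hn : 2 ≤ n) {x : Fin n → ℂ} (hx : x ∈ SStar n hn)
    {a b c : ℂ} (ha : a ≠ 0) (hb : b ≠ 0) (hc : c ≠ 0) (habc : a * b = c ^ 2) :
    (fun i : Fin n => (if (i : ℕ) = 0 then a else if (i : ℕ) = 1 then b else c) * x i) ∈
      SStar n hn := by
  obtain ⟨hx0, hxq⟩ := hx
  refine ⟨fun hzero => hx0 (funext fun i => ?_), ?_⟩
  · have hi := congrFun hzero i
    have hcoef : (if (i : ℕ) = 0 then a else if (i : ℕ) = 1 then b else c) ≠ 0 := by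
      split_ifs <;> assumption
    exact (mul_eq_zero.mp hi).resolve_left hcoef
  · have hsum : ∀ j : Fin n,
        (if 2 ≤ (j : ℕ) then ((if (j : ℕ) = 0 then a else if (j : ℕ) = 1 then b else c) * x j) ^ 2
          else 0) = c ^ 2 * (if 2 ≤ (j : ℕ) then x j ^ 2 else 0) := by
      intro j
      by_cases hj : 2 ≤ (j : ℕ)
      · simp only [hj, if_true, show (j : ℕ) ≠ 0 by omega, show (j : ℕ) ≠ 1 by omega, if_false]
        ring
      · simp [hj]
    simp only [Finset.sum_congr rfl fun j _ => hsum j, ← Finset.mul_sum, ← hxq]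
    simp only [if_true, one_ne_zero, if_false]
    linear_combination x ⟨0, by omega⟩ * x ⟨1, by omega⟩ * habc

/-- planar version of Remark 5.2: multiplicative sprays preserve the class
`𝒪_Δ(S,u)`.  With `u, v` holomorphic `𝔖*`-valued maps off `E₀`, meromorphic at `E₀`,
`v − u` vanishing to order at least `r` at every point of `P`, `g` holomorphic with
`|g| < 1` vanishing to order at least `d(p) = r + Σᵢ (pole order of uᵢ at p)` at every
`p ∈ P`, and `(s₁,s₂,s₃) ∈ 𝒮₂(𝔻)`, the map
`w = ((s₁∘g)·v₁, (s₂∘g)·v₂, (s₃∘g)·v₃, …, (s₃∘g)·vₙ)` is again a holomorphic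
`𝔖*`-valued map off `E₀`, meromorphic at `E₀`, with `w − u` vanishing to order at least
`r` at every point of `P`. -/
theorem statement_14 (n : ℕ) (hn : 3 ≤ n) (Ω : Set ℂ) (hΩ : IsOpen Ω)
    (P E₀ : Finset ℂ) (hPΩ : ↑P ⊆ Ω) (hE₀P : E₀ ⊆ P) (r : ℕ)
    (u : ℂ → Fin n → ℂ)
    (ord : ℂ → Fin n → ℕ)
    (hord : ∀ p ∈ P, ∀ i, ∃ g : ℂ → ℂ, AnalyticAt ℂ g p ∧
      (∀ᶠ z in 𝓝[≠] p, u z i = g z / (z - p) ^ (ord p i)) ∧ (ord p i ≠ 0 → g p ≠ 0))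
    (g : ℂ → ℂ) (hg : DifferentiableOn ℂ g Ω)
    (hg1 : ∀ z ∈ Ω, ‖g z‖ < 1)
    (hgv : ∀ p ∈ P, VanishesToOrder g p (r + ∑ i, ord p i))
    (s₁ s₂ s₃ : ℂ → ℂ) (hs : InS2 s₁ s₂ s₃)
    (v : ℂ → Fin n → ℂ)
    (hv : ∀ i, DifferentiableOn ℂ (fun z => v z i) (Ω \ ↑E₀))
    (hvS : ∀ z ∈ Ω \ (↑E₀ : Set ℂ), v z ∈ SStar n (by omega))
    (hvm : ∀ p ∈ E₀, ∀ i, MeromAt (fun z => v z i) p)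
    (hvu : ∀ p ∈ P, ∀ i, ExtVanishes (fun z => v z i - u z i) p r)
    (w : ℂ → Fin n → ℂ)
    (hw : ∀ z i, w z i = (if (i : ℕ) = 0 then s₁ (g z)
        else if (i : ℕ) = 1 then s₂ (g z) else s₃ (g z)) * v z i) :
    (∀ i, DifferentiableOn ℂ (fun z => w z i) (Ω \ ↑E₀)) ∧
    (∀ z ∈ Ω \ (↑E₀ : Set ℂ), w z ∈ SStar n (by omega)) ∧
    (∀ p ∈ E₀, ∀ i, MeromAt (fun z => w z i) p) ∧
    (∀ p ∈ P, ∀ i, ExtVanishes (fun z => w z i - u z i) p r) := by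
  obtain ⟨hs₁, hs₂, hs₃, hs_ne, hs₁0, hs₂0, hs₃0, -, -⟩ := hs
  set S : Fin n → ℂ → ℂ := fun i => if (i : ℕ) = 0 then s₁ else if (i : ℕ) = 1 then s₂ else s₃
  have hwS : ∀ z i, w z i = S i (g z) * v z i := fun z i => by simp only [hw, S, ite_apply]
  have hS : ∀ i, DifferentiableOn ℂ (S i) (Metric.ball 0 1) := fun i => by
    simp only [S]; split_ifs <;> assumption
  have hS0 : ∀ i, S i 0 = 1 := fun i => by simp only [S]; split_ifs <;> assumption
  have hgΩ : Set.MapsTo g Ω (Metric.ball 0 1) := fun z hz => mem_ball_zero_iff.mpr (hg1 z hz)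
  have hSg : ∀ i, ∀ p ∈ Ω, AnalyticAt ℂ (fun z => S i (g z)) p := fun i p hp =>
    ((hS i).analyticAt (Metric.isOpen_ball.mem_nhds (hgΩ hp))).comp
      (hg.analyticAt (hΩ.mem_nhds hp))
  refine ⟨fun i => ?_, fun z hz => ?_, fun p hp i => ?_, fun p hp i => ?_⟩
  · simp only [hwS]
    exact ((hS i).comp (hg.mono Set.sdiff_subset) (hgΩ.mono Set.sdiff_subset subset_rfl)).mul (hv i)
  · obtain ⟨h₁, h₂, h₃, h₁₂⟩ := hs_ne (g z) (hgΩ hz.1)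
    rw [show w z = _ from funext (hw z)]
    exact ite_mul_mem_SStar _ (hvS z hz) h₁ h₂ h₃ h₁₂
  · simp only [hwS]
    exact (hvm p hp i).analyticAt_mul (hSg i p (hPΩ (hE₀P hp)))
  · obtain ⟨h, hh, hu, -⟩ := hord p hp i
    have hS1 : VanishesToOrder (fun z => S i (g z) - 1) p (r + ∑ j, ord p j) := by
      simpa only [hS0] using (hgv p hp).comp_sub_apply_zero
        ((hS i).analyticAt (Metric.isOpen_ball.mem_nhds (hgΩ (hPΩ hp))))
    simp only [hwS]
    exact (hvu p hp i).mul_sub (hSg i p (hPΩ hp)) hS1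
      (Nat.add_le_add_left (Finset.single_le_sum (fun j _ => Nat.zero_le (ord p j))
        (Finset.mem_univ i)) r) hh hu
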